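/- Let G = ((V,E),(V_1,V_2), v_in, AP, L) be a labeled game graph that is controllably recurrent and let 0 ≤ m ≤ |AP|. Then there exists a player-1 strategy π_1 such that for every player-2 strategy π_2, |L(ω(v_in,π_1,π_2))| ≥ m, if and only if every end component U of G with v_in ∈ U satisfies |⋃_{u∈U} L(u)| ≥ m. -/

import Mathlib

/-- `π` is a valid strategy for the player owning the vertices satisfying `owns`:
for every history `w` and current vertex `v` owned by the player, the chosen
successor `π w v` is along an edge of the game graph. -/
def IsStrat {V : Type*} (E : V → V → Prop) (owns : V → Prop)
    (π : List V → V → V) : Prop :=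
  ∀ (w : List V) (v : V), owns v → E v (π w v)

/-- Auxiliary function computing, after `i` steps of the play from `v`, the pair
(current vertex, history of previously visited vertices).  Here `P1 v = true` means
`v` is a player-1 vertex, and `P1 v = false` that it is a player-2 vertex. -/
def playSeq {V : Type*} (P1 : V → Bool) (π1 π2 : List V → V → V) (v : V) :
    ℕ → V × List V
  | 0 => (v, [])
  | i + 1 =>
    let p := playSeq P1 π1 π2 v i
    (if P1 p.1 then π1 p.2 p.1 else π2 p.2 p.1, p.2 ++ [p.1])

/-- The unique play `ω(v, π1, π2)`: the `i`-th vertex of the infinite play starting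
at `v` in which player 1 (resp. player 2) resolves choices at vertices `u` with
`P1 u = true` (resp. `P1 u = false`) using strategy `π1` (resp. `π2`). -/
def play {V : Type*} (P1 : V → Bool) (π1 π2 : List V → V → V) (v : V) (i : ℕ) : V :=
  (playSeq P1 π1 π2 v i).1

/-- An end component of a labeled game graph: a nonempty set `U` of vertices that is
(i) strongly connected — between any two vertices of `U` there is a path of positive
length using only vertices of `U` — and (ii) player-1 closed — every edge leaving a
player-1 vertex of `U` stays in `U`. -/
def IsEndComponent {V : Type*} (E : V → V → Prop) (P1 : V → Bool) (U : Set V) :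
    Prop :=
  U.Nonempty ∧
    (∀ u ∈ U, ∀ u' ∈ U,
      Relation.TransGen (fun a b => a ∈ U ∧ b ∈ U ∧ E a b) u u') ∧
    (∀ u ∈ U, P1 u = true → ∀ u', E u u' → u' ∈ U)

/-!
If player 1 forces coverage `m`, player 2 can answer by never leaving a given end component
`U ∋ vin` (it is player-1 closed and each of its vertices has a successor in it), so the labels
of `U` already number at least `m`.

Conversely, controllable recurrence puts every reachable vertex into the attractor of `vin`.
Player 1 cuts the play into epochs at the visits to `vin`. At the first visit to a vertex within
an epoch it explores, picking successors along an enumeration of `V` that repeats every vertex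
infinitely often; otherwise it moves down the attractor. Every epoch ends, since each step either
enlarges the set of vertices seen in the epoch or lowers the attractor rank. Hence every vertex
visited infinitely often is explored infinitely often, so the vertices visited infinitely often
form an end component containing `vin`, and all its labels are seen.
-/

open Filter Relation

section Play

variable {V : Type*} (P1 : V → Bool)

theorem play_succ (π1 π2 : List V → V → V) (v : V) (i : ℕ) :
    play P1 π1 π2 v (i + 1) =
      if P1 (play P1 π1 π2 v i) then π1 (playSeq P1 π1 π2 v i).2 (play P1 π1 π2 v i)
      else π2 (playSeq P1 π1 π2 v i).2 (play P1 π1 π2 v i) :=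
  rfl

theorem play_edge {E : V → V → Prop} {π1 π2 : List V → V → V}
    (hπ1 : IsStrat E (fun u => P1 u = true) π1) (hπ2 : IsStrat E (fun u => P1 u = false) π2)
    (v : V) (i : ℕ) : E (play P1 π1 π2 v i) (play P1 π1 π2 v (i + 1)) := by
  rw [play_succ]
  split_ifs with h
  · exact hπ1 _ _ h
  · exact hπ2 _ _ (by simpa using h)

end Play

section Memory

variable {V M : Type*} (upd : M → V → M) (init : M)

def runMem (p : ℕ → V) : ℕ → M
  | 0 => init
  | i + 1 => upd (runMem p i) (p i)

def memStrat (act : M → V → V) : List V → V → V := fun w v => act (w.foldl upd init) v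

theorem isStrat_memStrat {E : V → V → Prop} {owns : V → Prop} {act : M → V → V}
    (h : ∀ m v, owns v → E v (act m v)) : IsStrat E owns (memStrat upd init act) :=
  fun _ v hv => h _ v hv

theorem foldl_playSeq_snd (P1 : V → Bool) (π1 π2 : List V → V → V) (v : V) (i : ℕ) :
    (playSeq P1 π1 π2 v i).2.foldl upd init = runMem upd init (play P1 π1 π2 v) i := by
  induction i with
  | zero => rfl
  | succ i ih => rw [runMem, ← ih]; exact List.foldl_concat ..

theorem play_succ_memStrat (P1 : V → Bool) (act : M → V → V) (π2 : List V → V → V) (v : V)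
    (i : ℕ) (h : P1 (play P1 (memStrat upd init act) π2 v i) = true) :
    play P1 (memStrat upd init act) π2 v (i + 1) =
      act (runMem upd init (play P1 (memStrat upd init act) π2 v) i)
        (play P1 (memStrat upd init act) π2 v i) := by
  rw [play_succ, if_pos h, memStrat, foldl_playSeq_snd]

end Memory

section Trap

variable {V : Type*} (E : V → V → Prop) (P1 : V → Bool)

def IsTrap (T : Set V) : Prop :=
  (∀ v ∈ T, P1 v = true → ∀ u, E v u → u ∈ T) ∧
    (∀ v ∈ T, P1 v = false → ∃ u, E v u ∧ u ∈ T)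

open Classical in
noncomputable def trapStrat (hE : ∀ v, ∃ u, E v u) (T : Set V) : List V → V → V :=
  fun _ v => if h : ∃ u, E v u ∧ u ∈ T then h.choose else (hE v).choose

theorem isStrat_trapStrat (hE : ∀ v, ∃ u, E v u) (T : Set V) (owns : V → Prop) :
    IsStrat E owns (trapStrat E hE T) := by
  intro _ v _
  unfold trapStrat
  split_ifs with h
  · exact h.choose_spec.1
  · exact (hE v).choose_spec

variable {E P1}

theorem IsTrap.play_mem {T : Set V} (hT : IsTrap E P1 T) (hE : ∀ v, ∃ u, E v u)
    {π1 : List V → V → V} (hπ1 : IsStrat E (fun u => P1 u = true) π1) {v : V} (hv : v ∈ T)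
    (i : ℕ) : play P1 π1 (trapStrat E hE T) v i ∈ T := by
  induction i with
  | zero => exact hv
  | succ i ih =>
    rw [play_succ]
    cases hp : P1 (play P1 π1 (trapStrat E hE T) v i)
    · have h := hT.2 _ ih hp
      rw [if_neg Bool.false_ne_true, trapStrat, dif_pos h]
      exact h.choose_spec.2
    · exact hT.1 _ ih hp _ (hπ1 _ _ hp)

theorem IsEndComponent.isTrap {U : Set V} (hU : IsEndComponent E P1 U) : IsTrap E P1 U := by
  refine ⟨hU.2.2, fun v hv _ => ?_⟩
  obtain ⟨u, ⟨-, hu, hvu⟩, -⟩ := TransGen.head'_iff.mp (hU.2.1 v hv v hv)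
  exact ⟨u, hvu, hu⟩

end Trap

section Attractor

variable {V : Type*} (E : V → V → Prop) (P1 : V → Bool) (B : Set V)

def attractor : ℕ → Set V
  | 0 => B
  | k + 1 => attractor k ∪ {v | (P1 v = true ∧ ∃ u ∈ attractor k, E v u) ∨
      (P1 v = false ∧ ∀ u, E v u → u ∈ attractor k)}

theorem attractor_mono : Monotone (attractor E P1 B) :=
  monotone_nat_of_le_succ fun _ => Set.subset_union_left

theorem isTrap_compl_iUnion_attractor [Finite V] :
    IsTrap E P1 (⋃ k, attractor E P1 B k)ᶜ := by
  obtain ⟨K, hK⟩ :=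
    WellFoundedGT.monotone_chain_condition ⟨attractor E P1 B, attractor_mono E P1 B⟩
  have hsub : ∀ k, attractor E P1 B k ⊆ attractor E P1 B K := fun k =>
    (attractor_mono E P1 B (le_max_left k K)).trans (hK _ (le_max_right k K)).ge
  constructor
  · intro v hv hp u hvu hu
    obtain ⟨k, hk⟩ := Set.mem_iUnion.mp hu
    exact hv (Set.mem_iUnion.mpr ⟨k + 1, Or.inr (Or.inl ⟨hp, u, hk, hvu⟩)⟩)
  · intro v hv hp
    by_contra! h
    refine hv (Set.mem_iUnion.mpr ⟨K + 1, Or.inr (Or.inr ⟨hp, fun u hvu => ?_⟩)⟩)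
    obtain ⟨k, hk⟩ := Set.mem_iUnion.mp (not_not.mp (h u hvu))
    exact hsub k hk

theorem mem_iUnion_attractor_of_forces [Finite V] (hE : ∀ v, ∃ u, E v u) {v : V}
    (h : ∃ π1, IsStrat E (fun u => P1 u = true) π1 ∧
      ∀ π2, IsStrat E (fun u => P1 u = false) π2 → ∃ i, play P1 π1 π2 v i ∈ B) :
    v ∈ ⋃ k, attractor E P1 B k := by
  by_contra hv
  obtain ⟨π1, hπ1, hwin⟩ := h
  obtain ⟨i, hi⟩ := hwin _ (isStrat_trapStrat E hE _ _)
  exact (isTrap_compl_iUnion_attractor E P1 B).play_mem hE hπ1 hv i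
    (Set.mem_iUnion.mpr ⟨0, hi⟩)

noncomputable def attractorRank (v : V) : ℕ := sInf {k | v ∈ attractor E P1 B k}

theorem attractorRank_le {v : V} {k : ℕ} (hv : v ∈ attractor E P1 B k) :
    attractorRank E P1 B v ≤ k :=
  Nat.sInf_le hv

theorem attractor_step {v : V} (hv : v ∈ ⋃ k, attractor E P1 B k) (hvB : v ∉ B) :
    ∃ k, attractorRank E P1 B v = k + 1 ∧
      ((P1 v = true ∧ ∃ u ∈ attractor E P1 B k, E v u) ∨
        (P1 v = false ∧ ∀ u, E v u → u ∈ attractor E P1 B k)) := by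
  have hmem : v ∈ attractor E P1 B (attractorRank E P1 B v) :=
    Nat.sInf_mem (Set.mem_iUnion.mp hv)
  have hne : attractorRank E P1 B v ≠ 0 := fun h0 => hvB (by rwa [h0] at hmem)
  obtain ⟨k, hk⟩ := Nat.exists_eq_succ_of_ne_zero hne
  rw [hk] at hmem
  refine ⟨k, hk, hmem.resolve_left fun h => ?_⟩
  have := attractorRank_le E P1 B h
  omega

open Classical in
noncomputable def attractorMove (hE : ∀ v, ∃ u, E v u) (v : V) : V :=
  if h : ∃ u, E v u ∧ attractorRank E P1 B u < attractorRank E P1 B v then h.choose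
  else (hE v).choose

theorem attractorMove_edge (hE : ∀ v, ∃ u, E v u) (v : V) :
    E v (attractorMove E P1 B hE v) := by
  unfold attractorMove
  split_ifs with h
  · exact h.choose_spec.1
  · exact (hE v).choose_spec

theorem attractorRank_lt_of_edge (hE : ∀ v, ∃ u, E v u) {v u : V}
    (hv : v ∈ ⋃ k, attractor E P1 B k) (hvB : v ∉ B) (hvu : E v u)
    (hmove : P1 v = true → u = attractorMove E P1 B hE v) :
    attractorRank E P1 B u < attractorRank E P1 B v := by
  obtain ⟨k, hk, ⟨hp, w, hw, hvw⟩ | ⟨-, hall⟩⟩ := attractor_step E P1 B hv hvB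
  · have h : ∃ u, E v u ∧ attractorRank E P1 B u < attractorRank E P1 B v :=
      ⟨w, hvw, hk ▸ Nat.lt_succ_of_le (attractorRank_le E P1 B hw)⟩
    rw [hmove hp, attractorMove, dif_pos h]
    exact h.choose_spec.2
  · exact hk ▸ Nat.lt_succ_of_le (attractorRank_le E P1 B (hall u hvu))

end Attractor

section InfOften

variable {V : Type*}

def infOften (p : ℕ → V) : Set V := {v | ∃ᶠ i in atTop, p i = v}

theorem exists_seq_frequently_eq (α : Type*) [Nonempty α] [Countable α] :
    ∃ f : ℕ → α, ∀ a, ∃ᶠ n in atTop, f n = a := by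
  obtain ⟨g, hg⟩ := exists_surjective_nat α
  refine ⟨fun n => g n.unpair.1, fun a => frequently_atTop.mpr fun N => ?_⟩
  obtain ⟨k, rfl⟩ := hg a
  exact ⟨Nat.pair k N, Nat.right_le_pair k N, by simp⟩

theorem eventually_mem_infOften [Finite V] (p : ℕ → V) :
    ∀ᶠ i in atTop, p i ∈ infOften p := by
  have h : ∀ v, ∀ᶠ i in atTop, p i = v → v ∈ infOften p := fun v => by
    by_cases hv : v ∈ infOften p
    · exact Eventually.of_forall fun _ _ => hv
    · exact (not_frequently.mp hv).mono fun _ hi heq => absurd heq hi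
  filter_upwards [eventually_all.mpr h] with i hi using hi _ rfl

theorem transGen_infOften [Finite V] {E : V → V → Prop} {p : ℕ → V}
    (hp : ∀ i, E (p i) (p (i + 1))) {u u' : V} (hu : u ∈ infOften p) (hu' : u' ∈ infOften p) :
    TransGen (fun a b => a ∈ infOften p ∧ b ∈ infOften p ∧ E a b) u u' := by
  obtain ⟨T, hT⟩ := eventually_atTop.mp (eventually_mem_infOften p)
  obtain ⟨i, hi, rfl⟩ := frequently_atTop.mp hu T
  obtain ⟨j, hj, rfl⟩ := frequently_atTop.mp hu' (i + 1)
  refine (transGen_of_succ_of_lt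
    (fun a b => p a ∈ infOften p ∧ p b ∈ infOften p ∧ E (p a) (p b))
    (fun k hk => ?_) hj).lift p fun _ _ h => h
  exact ⟨hT k (hi.trans hk.1), hT (k + 1) (hi.trans (hk.1.trans k.le_succ)), hp k⟩

end InfOften

section Explore

variable {V : Type*} (E : V → V → Prop) (hE : ∀ v, ∃ u, E v u) (f : ℕ → V)

open Classical in
noncomputable def explore (n : ℕ) (v : V) : V :=
  if E v (f n) then f n else (hE v).choose

theorem explore_edge (n : ℕ) (v : V) : E v (explore E hE f n v) := by
  unfold explore
  split_ifs with h
  · exact h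
  · exact (hE v).choose_spec

theorem explore_of_edge {n : ℕ} {v : V} (h : E v (f n)) : explore E hE f n v = f n := by
  rw [explore, if_pos h]

end Explore

section Cover

variable {V : Type*} [DecidableEq V] (E : V → V → Prop) (P1 : V → Bool) (vin : V)
  (hE : ∀ v, ∃ u, E v u) (f : ℕ → V)

/-- The memory `(S, c)` of the covering strategy: `S` holds the vertices other than `vin` visited
since the last visit to `vin`, and `c v` counts the visits to `v` made while `v ∉ S`; at such a
visit player 1 explores, choosing `f (c v)` if it is a successor. -/
def coverUpd (m : Finset V × (V → ℕ)) (x : V) : Finset V × (V → ℕ) :=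
  (if x = vin then ∅ else insert x m.1,
    if x ∈ m.1 then m.2 else Function.update m.2 x (m.2 x + 1))

noncomputable def coverAct (m : Finset V × (V → ℕ)) (v : V) : V :=
  if v ∈ m.1 then attractorMove E P1 {vin} hE v else explore E hE f (m.2 v) v

noncomputable def coverStrat : List V → V → V :=
  memStrat (coverUpd vin) (∅, 0) (coverAct E P1 vin hE f)

theorem isStrat_coverStrat : IsStrat E (fun u => P1 u = true) (coverStrat E P1 vin hE f) :=
  isStrat_memStrat _ _ fun m v _ => by
    unfold coverAct
    split_ifs
    · exact attractorMove_edge E P1 _ hE v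
    · exact explore_edge E hE f _ v

theorem notMem_runMem_coverUpd_fst (p : ℕ → V) {t i : ℕ} {u : V} (ht : p t = vin) (hti : t < i)
    (hu : ∀ j, t < j → j < i → p j ≠ u) : u ∉ (runMem (coverUpd vin) (∅, 0) p i).1 := by
  induction i, hti using Nat.le_induction with
  | base => simp [runMem, coverUpd, ht]
  | succ i hti ih =>
    simp only [runMem, coverUpd]
    split_ifs
    · exact Finset.notMem_empty u
    · rw [Finset.mem_insert, not_or]
      exact ⟨(hu i hti i.lt_succ_self).symm, ih fun j h1 h2 => hu j h1 (h2.trans i.lt_succ_self)⟩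

theorem runMem_coverUpd_snd (p : ℕ → V) (u : V) (i : ℕ) :
    (runMem (coverUpd vin) (∅, 0) p i).2 u =
      Nat.count (fun j => p j = u ∧ u ∉ (runMem (coverUpd vin) (∅, 0) p j).1) i := by
  induction i with
  | zero => rfl
  | succ i ih =>
    rw [Nat.count_succ, ← ih]
    simp only [runMem, coverUpd]
    by_cases h : p i ∈ (runMem (coverUpd vin) (∅, 0) p i).1
    · have : ¬(p i = u ∧ u ∉ (runMem (coverUpd vin) (∅, 0) p i).1) := fun h' => h'.2 (h'.1 ▸ h)
      simp [h, this]
    · by_cases hu : p i = u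
      · subst hu; simp [h]
      · simp [h, hu, Function.update_of_ne (Ne.symm hu)]

theorem frequently_eq_vin [Fintype V] {p : ℕ → V} (hp : ∀ i, E (p i) (p (i + 1)))
    (hact : ∀ i, P1 (p i) = true →
      p (i + 1) = coverAct E P1 vin hE f (runMem (coverUpd vin) (∅, 0) p i) (p i))
    (hA : ∀ i, p i ∈ ⋃ k, attractor E P1 {vin} k) : ∃ᶠ i in atTop, p i = vin := by
  by_contra h
  obtain ⟨N, hN⟩ := eventually_atTop.mp (not_frequently.mp h)
  set mem := runMem (coverUpd vin) (∅, 0) p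
  obtain ⟨j, hj⟩ := WellFounded.not_rel_apply_succ (r := (· < ·))
    fun j => toLex ((mem (N + j)).1ᶜ, attractorRank E P1 {vin} (p (N + j)))
  have hne : p (N + j) ≠ vin := hN _ (Nat.le_add_right N j)
  have hS : (mem (N + j + 1)).1 = insert (p (N + j)) (mem (N + j)).1 := if_neg hne
  refine hj (Prod.Lex.toLex_lt_toLex.mpr ?_)
  by_cases hfree : p (N + j) ∈ (mem (N + j)).1
  · refine .inr ⟨by rw [← add_assoc, hS, Finset.insert_eq_of_mem hfree],
      attractorRank_lt_of_edge E P1 _ hE (hA _) hne (hp _) fun h1 => ?_⟩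
    rw [← add_assoc, hact _ h1, coverAct, if_pos hfree]
  · refine .inl ?_
    rw [← add_assoc, hS, compl_lt_compl_iff_lt]
    exact Finset.ssubset_insert hfree

theorem frequently_exploring_visit {p : ℕ → V} (hvin : ∃ᶠ i in atTop, p i = vin) {u : V}
    (hu : u ∈ infOften p) :
    ∃ᶠ i in atTop, p i = u ∧ u ∉ (runMem (coverUpd vin) (∅, 0) p i).1 := by
  refine frequently_atTop.mpr fun N => ?_
  obtain ⟨t, htN, ht⟩ := frequently_atTop.mp hvin N
  have hex : ∃ i, t < i ∧ p i = u := frequently_atTop.mp hu (t + 1)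
  obtain ⟨hlt, hpi⟩ := Nat.find_spec hex
  exact ⟨Nat.find hex, by omega, hpi, notMem_runMem_coverUpd_fst vin p ht hlt
    fun j htj hj hpj => Nat.find_min hex hj ⟨htj, hpj⟩⟩

theorem mem_infOften_of_edge {p : ℕ → V}
    (hact : ∀ i, P1 (p i) = true →
      p (i + 1) = coverAct E P1 vin hE f (runMem (coverUpd vin) (∅, 0) p i) (p i))
    (hf : ∀ v, ∃ᶠ n in atTop, f n = v) (hvin : ∃ᶠ i in atTop, p i = vin) {u u' : V}
    (hu : u ∈ infOften p) (hp1 : P1 u = true) (huu' : E u u') : u' ∈ infOften p := by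
  set free := fun j => p j = u ∧ u ∉ (runMem (coverUpd vin) (∅, 0) p j).1
  have hinf :=
    Nat.frequently_atTop_iff_infinite.mp (frequently_exploring_visit vin hvin hu)
  refine frequently_atTop.mpr fun N => ?_
  obtain ⟨n, hnN, hfn⟩ := frequently_atTop.mp (hf u') N
  obtain ⟨hpi, hfree⟩ := Nat.nth_mem_of_infinite hinf n
  have hcount : Nat.count free (Nat.nth free n) = n := Nat.count_nth_of_infinite hinf n
  refine ⟨Nat.nth free n + 1, ?_, ?_⟩
  · have := Nat.count_le free (n := Nat.nth free n)
    omega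
  · rw [hact _ (hpi ▸ hp1), coverAct, if_neg (hpi ▸ hfree), runMem_coverUpd_snd, hpi, hcount,
      explore_of_edge E hE f (hfn ▸ huu'), hfn]

theorem isEndComponent_infOften [Fintype V] {p : ℕ → V} (hp : ∀ i, E (p i) (p (i + 1)))
    (hact : ∀ i, P1 (p i) = true →
      p (i + 1) = coverAct E P1 vin hE f (runMem (coverUpd vin) (∅, 0) p i) (p i))
    (hA : ∀ i, p i ∈ ⋃ k, attractor E P1 {vin} k) (hf : ∀ v, ∃ᶠ n in atTop, f n = v) :
    IsEndComponent E P1 (infOften p) ∧ vin ∈ infOften p := by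
  have hvin := frequently_eq_vin E P1 vin hE f hp hact hA
  exact ⟨⟨⟨vin, hvin⟩, fun u hu u' hu' => transGen_infOften hp hu hu',
    fun u hu hp1 u' huu' => mem_infOften_of_edge E P1 vin hE f hact hf hvin hu hp1 huu'⟩, hvin⟩

end Cover

theorem controllably_recurrent_game_coverage_iff_end_components_general
    {V AP : Type*} [Fintype V] [Fintype AP]
    (E : V → V → Prop) (hE : ∀ v, ∃ u, E v u)
    (P1 : V → Bool) (vin : V) (L : V → Set AP)
    (m : ℕ)
    (hcr : ∀ v, Relation.ReflTransGen E vin v →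
      ∃ π1, IsStrat E (fun u => P1 u = true) π1 ∧
        ∀ π2, IsStrat E (fun u => P1 u = false) π2 →
          ∃ i : ℕ, play P1 π1 π2 v i = vin) :
    (∃ π1, IsStrat E (fun u => P1 u = true) π1 ∧
        ∀ π2, IsStrat E (fun u => P1 u = false) π2 →
          m ≤ (⋃ i : ℕ, L (play P1 π1 π2 vin i)).ncard) ↔
      (∀ U : Set V, IsEndComponent E P1 U → vin ∈ U →
        m ≤ (⋃ u ∈ U, L u).ncard) := by
  classical
  have : Nonempty V := ⟨vin⟩
  constructor
  · rintro ⟨π1, hπ1, hcov⟩ U hU hvU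
    have hstay := hU.isTrap.play_mem hE hπ1 hvU
    refine (hcov _ (isStrat_trapStrat E hE U _)).trans (Set.ncard_le_ncard ?_ (Set.toFinite _))
    exact Set.iUnion_subset fun i => Set.subset_biUnion_of_mem (hstay i)
  · intro hec
    obtain ⟨f, hf⟩ := exists_seq_frequently_eq V
    refine ⟨coverStrat E P1 vin hE f, isStrat_coverStrat E P1 vin hE f, fun π2 hπ2 => ?_⟩
    set p := play P1 (coverStrat E P1 vin hE f) π2 vin
    have hp : ∀ i, E (p i) (p (i + 1)) := play_edge P1 (isStrat_coverStrat E P1 vin hE f) hπ2 vin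
    have hA : ∀ i, p i ∈ ⋃ k, attractor E P1 {vin} k := fun i =>
      mem_iUnion_attractor_of_forces E P1 _ hE <| hcr _ <|
        (reflTransGen_of_succ_of_le (fun a b => E (p a) (p b)) (fun k _ => hp k)
          (Nat.zero_le i)).lift p fun _ _ h => h
    obtain ⟨hU, hvin⟩ := isEndComponent_infOften E P1 vin hE f hp
      (play_succ_memStrat _ _ P1 _ π2 vin) hA hf
    refine (hec _ hU hvin).trans (Set.ncard_le_ncard ?_ (Set.toFinite _))
    refine Set.iUnion₂_subset fun u hu => ?_
    obtain ⟨i, rfl⟩ := hu.exists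
    exact Set.subset_iUnion (fun i => L (p i)) i

/-- Let `G = ((V,E),(V_1,V_2), v_in, AP, L)` be a labeled game graph that is
controllably recurrent and `0 ≤ m ≤ |AP|`.  Then there exists a player-1 strategy
`π_1` such that for every player-2 strategy `π_2`, `|L(ω(v_in,π_1,π_2))| ≥ m`, if and
only if every end component `U` of `G` with `v_in ∈ U` satisfies
`|⋃_{u∈U} L(u)| ≥ m`. -/
theorem controllably_recurrent_game_coverage_iff_end_components
    {V AP : Type*} [Fintype V] [Fintype AP]
    (E : V → V → Prop) (hE : ∀ v, ∃ u, E v u)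
    (P1 : V → Bool) (vin : V) (L : V → Set AP)
    (m : ℕ) (hm : m ≤ Fintype.card AP)
    (hcr : ∀ v, Relation.ReflTransGen E vin v →
      ∃ π1, IsStrat E (fun u => P1 u = true) π1 ∧
        ∀ π2, IsStrat E (fun u => P1 u = false) π2 →
          ∃ i : ℕ, play P1 π1 π2 v i = vin) :
    (∃ π1, IsStrat E (fun u => P1 u = true) π1 ∧
        ∀ π2, IsStrat E (fun u => P1 u = false) π2 →
          m ≤ (⋃ i : ℕ, L (play P1 π1 π2 vin i)).ncard) ↔
      (∀ U : Set V, IsEndComponent E P1 U → vin ∈ U →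
        m ≤ (⋃ u ∈ U, L u).ncard) :=
  controllably_recurrent_game_coverage_iff_end_components_general E hE P1 vin L m hcr
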